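/- Let ψ be nondecreasing and e a random variable with continuous distribution function such that ψ(e + t₀) and ψ(e − t₀) are in L² for some t₀ > 0. Then ψ(e + t) → ψ(e) almost surely as t → 0, and m(t) = ‖ψ(e + t) − ψ(e)‖_{L²} → 0 as t → 0. -/

import Mathlib

open MeasureTheory Filter

theorem monotone_score_continuity {Ω : Type*} [MeasurableSpace Ω]
    (μ : Measure Ω) [IsProbabilityMeasure μ]
    (ψ : ℝ → ℝ) (hψ : Monotone ψ)
    (e : Ω → ℝ) (he : Measurable e)
    (hcont : ∀ u : ℝ, μ {ω | e ω = u} = 0)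
    (t₀ : ℝ) (ht₀ : 0 < t₀)
    (h₁ : MemLp (fun ω => ψ (e ω + t₀)) 2 μ)
    (h₂ : MemLp (fun ω => ψ (e ω - t₀)) 2 μ) :
    (∀ᵐ ω ∂μ, Tendsto (fun t => ψ (e ω + t)) (nhds 0) (nhds (ψ (e ω)))) ∧
      Tendsto (fun t => (∫ ω, (ψ (e ω + t) - ψ (e ω)) ^ 2 ∂μ) ^ (1/2 : ℝ))
        (nhds 0) (nhds 0) := by
  have hψm : Measurable ψ := hψ.measurable
  have hDc : {x : ℝ | ¬ ContinuousAt ψ x}.Countable := hψ.countable_not_continuousAt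
  have hnull : μ {ω | e ω ∈ {x : ℝ | ¬ ContinuousAt ψ x}} = 0 := by
    have hsub : {ω | e ω ∈ {x : ℝ | ¬ ContinuousAt ψ x}} ⊆
        ⋃ u ∈ {x : ℝ | ¬ ContinuousAt ψ x}, {ω | e ω = u} := by
      intro ω hω; exact Set.mem_biUnion hω rfl
    refine measure_mono_null hsub ?_
    exact (measure_biUnion_null_iff hDc).2 fun u _ => hcont u
  have has : ∀ᵐ ω ∂μ, Tendsto (fun t => ψ (e ω + t)) (nhds 0) (nhds (ψ (e ω))) := by
    have hae : ∀ᵐ ω ∂μ, e ω ∉ {x : ℝ | ¬ ContinuousAt ψ x} := by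
      rw [ae_iff]
      simpa using hnull
    filter_upwards [hae] with ω hω
    have hc : ContinuousAt ψ (e ω) := not_not.mp hω
    have ht : Tendsto (fun t : ℝ => e ω + t) (nhds 0) (nhds (e ω)) := by
      simpa using (tendsto_id : Tendsto id (nhds (0:ℝ)) (nhds 0)).const_add (e ω)
    exact hc.tendsto.comp ht
  refine ⟨has, ?_⟩
  have hg : MemLp (fun ω => ψ (e ω + t₀) - ψ (e ω - t₀)) 2 μ := h₁.sub h₂
  have hbi : Integrable (fun ω => (ψ (e ω + t₀) - ψ (e ω - t₀)) ^ 2) μ := hg.integrable_sq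
  have hmeas : ∀ t : ℝ, AEStronglyMeasurable (fun ω => (ψ (e ω + t) - ψ (e ω)) ^ 2) μ := by
    intro t
    exact (((hψm.comp (he.add_const t)).sub (hψm.comp he)).pow_const 2).aestronglyMeasurable
  have hI : Tendsto (fun t => ∫ ω, (ψ (e ω + t) - ψ (e ω)) ^ 2 ∂μ) (nhds 0) (nhds 0) := by
    have key : Tendsto (fun t => ∫ ω, (ψ (e ω + t) - ψ (e ω)) ^ 2 ∂μ) (nhds 0)
        (nhds (∫ _ω, (0:ℝ) ∂μ)) := by
      apply tendsto_integral_filter_of_dominated_convergence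
        (bound := fun ω => (ψ (e ω + t₀) - ψ (e ω - t₀)) ^ 2)
      · exact Eventually.of_forall hmeas
      · have hmem : Set.Icc (-t₀) t₀ ∈ nhds (0:ℝ) := Icc_mem_nhds (by linarith) ht₀
        filter_upwards [hmem] with t ht
        refine Eventually.of_forall fun ω => ?_
        have h1 : ψ (e ω - t₀) ≤ ψ (e ω + t) := hψ (by linarith [ht.1])
        have h2 : ψ (e ω + t) ≤ ψ (e ω + t₀) := hψ (by linarith [ht.2])
        have h3 : ψ (e ω - t₀) ≤ ψ (e ω) := hψ (by linarith)
        have h4 : ψ (e ω) ≤ ψ (e ω + t₀) := hψ (by linarith)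
        rw [Real.norm_eq_abs, abs_of_nonneg (sq_nonneg _)]
        apply sq_le_sq' <;> linarith
      · exact hbi
      · filter_upwards [has] with ω hω
        have hsub : Tendsto (fun t => ψ (e ω + t) - ψ (e ω)) (nhds 0) (nhds 0) := by
          simpa using hω.sub_const (ψ (e ω))
        simpa using hsub.pow 2
    simpa using key
  have hcontrpow : ContinuousAt (fun x : ℝ => x ^ (1/2 : ℝ)) 0 :=
    Real.continuousAt_rpow_const 0 (1/2) (Or.inr (by norm_num))
  have hc2 := hcontrpow.tendsto.comp hI
  simpa [Real.zero_rpow, Function.comp_def] using hc2
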